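/- arXiv:2509.01597 — 11 statements merged into one kernel-verified Lean document; each statement's English description precedes it below -/
import Mathlib

section
/- Let f be a neighbor function that is unbounded above, and let g : [f(0), ∞) → [0,∞) be the inverse of f (so g(f(x)) = x for all x ≥ 0 and f(g(a)) = a for all a ≥ f(0)). For t ≥ 0 and x ≥ 0 define the uncertainty interval I_{f,t}(x) = [g(max(f(0), f(x) − t)), g(f(x) + t)]. Then for all 0 ≤ x < y and t ≥ 0, the length of the uncertainty interval around y is at least that around x: g(f(y)+t) − g(max(f(0), f(y)−t)) ≥ g(f(x)+t) − g(max(f(0), f(x)−t)). -/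
/-- A neighbor function: strictly increasing, continuous and concave on `[0, ∞)`,
and such that `x ↦ f (exp x)` is convex on `ℝ`. -/
def IsNeighborFun (f : ℝ → ℝ) : Prop :=
  StrictMonoOn f (Set.Ici (0 : ℝ)) ∧ ContinuousOn f (Set.Ici (0 : ℝ)) ∧
    ConcaveOn ℝ (Set.Ici (0 : ℝ)) f ∧ ConvexOn ℝ Set.univ (fun x => f (Real.exp x))

theorem uncertainty_interval_length_mono (f g : ℝ → ℝ) (hf : IsNeighborFun f)
    (hub : ∀ M : ℝ, ∃ x : ℝ, 0 ≤ x ∧ M ≤ f x)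
    (hg0 : ∀ a : ℝ, f 0 ≤ a → 0 ≤ g a)
    (hgf : ∀ x : ℝ, 0 ≤ x → g (f x) = x)
    (hfg : ∀ a : ℝ, f 0 ≤ a → f (g a) = a)
    (x y t : ℝ) (hx : 0 ≤ x) (hxy : x < y) (ht : 0 ≤ t) :
    g (f x + t) - g (max (f 0) (f x - t)) ≤ g (f y + t) - g (max (f 0) (f y - t)) := by
  obtain ⟨hmono, hcont, hconc, hexp⟩ := hf
  -- g is monotone on [f 0, ∞)
  have hgmono : ∀ u v : ℝ, f 0 ≤ u → u ≤ v → g u ≤ g v := by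
    intro u v hu huv
    by_contra h
    push_neg at h
    have h2 := hmono (hg0 v (hu.trans huv)) (hg0 u hu) h
    rw [hfg v (hu.trans huv), hfg u hu] at h2
    linarith
  -- g is convex on [f 0, ∞)
  have hgconv : ConvexOn ℝ (Set.Ici (f 0)) g := by
    refine ⟨convex_Ici _, ?_⟩
    intro a ha b hb μ ν hμ hν hμν
    have hga := hg0 a ha
    have hgb := hg0 b hb
    have hmem : μ • g a + ν • g b ∈ Set.Ici (0 : ℝ) := by
      simp only [Set.mem_Ici, smul_eq_mul]
      positivity
    have hcc := hconc.2 hga hgb hμ hν hμν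
    rw [hfg a ha, hfg b hb] at hcc
    have h1 : f 0 ≤ μ • a + ν • b := by
      have ha' : f 0 ≤ a := ha
      have hb' : f 0 ≤ b := hb
      simp only [smul_eq_mul]
      calc f 0 = (μ + ν) * f 0 := by rw [hμν, one_mul]
        _ = μ * f 0 + ν * f 0 := by ring
        _ ≤ μ * a + ν * b :=
          add_le_add (mul_le_mul_of_nonneg_left ha' hμ) (mul_le_mul_of_nonneg_left hb' hν)
    have h2 : g (μ • a + ν • b) ≤ g (f (μ • g a + ν • g b)) := hgmono _ _ h1 hcc
    rwa [hgf _ hmem] at h2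
  -- key lemma from convexity
  have key : ∀ p q u v : ℝ, f 0 ≤ p → p ≤ q → p ≤ u → q ≤ v → u ≤ v → u - p ≤ v - q →
      g u - g p ≤ g v - g q := by
    intro p q u v hp hpq hpu hqv huv hlen
    rcases eq_or_lt_of_le hpu with h | h
    · rw [← h]
      have := hgmono q v (hp.trans hpq) hqv
      linarith
    · have hqv' : q < v := by linarith
      have hpmem : p ∈ Set.Ici (f 0) := hp
      have hqmem : q ∈ Set.Ici (f 0) := hp.trans hpq
      have humem : u ∈ Set.Ici (f 0) := hp.trans hpu
      have hvmem : v ∈ Set.Ici (f 0) := hqmem.trans hqv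
      have hpv : p < v := lt_of_le_of_lt hpq hqv'
      have s1 : (g u - g p) / (u - p) ≤ (g v - g p) / (v - p) :=
        hgconv.secant_mono hpmem humem hvmem h.ne' hpv.ne' huv
      have s2 : (g p - g v) / (p - v) ≤ (g q - g v) / (q - v) :=
        hgconv.secant_mono hvmem hpmem hqmem hpv.ne hqv'.ne hpq
      have s2' : (g v - g p) / (v - p) ≤ (g v - g q) / (v - q) := by
        have e1 : (g p - g v) / (p - v) = (g v - g p) / (v - p) := by
          rw [← neg_sub (g v) (g p), ← neg_sub v p, neg_div_neg_eq]
        have e2 : (g q - g v) / (q - v) = (g v - g q) / (v - q) := by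
          rw [← neg_sub (g v) (g q), ← neg_sub v q, neg_div_neg_eq]
        rw [e1, e2] at s2
        exact s2
      have s3 : (g u - g p) / (u - p) ≤ (g v - g q) / (v - q) := s1.trans s2'
      have hup : (0:ℝ) < u - p := by linarith
      have hvq : (0:ℝ) < v - q := by linarith
      have hS : 0 ≤ g v - g q := by
        have := hgmono q v hqmem hqv
        linarith
      have h4 : (g u - g p) * (v - q) ≤ (g v - g q) * (u - p) := by
        rw [div_le_div_iff₀ hup hvq] at s3
        exact s3
      nlinarith [mul_le_mul_of_nonneg_left hlen hS]
  -- apply with p, q, u, v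
  have hfa : f 0 ≤ f x := hmono.monotoneOn Set.self_mem_Ici hx hx
  have hfb : f 0 ≤ f y := hfa.trans (hmono hx (hx.trans hxy.le) hxy).le
  have hab : f x ≤ f y := (hmono hx (hx.trans hxy.le) hxy).le
  refine key (max (f 0) (f x - t)) (max (f 0) (f y - t)) (f x + t) (f y + t)
    (le_max_left _ _) ?_ ?_ ?_ (by linarith) ?_
  · exact max_le_max le_rfl (by linarith)
  · exact max_le (by linarith) (by linarith)
  · exact max_le (by linarith) (by linarith)
  · rcases le_total (f 0) (f x - t) with h1 | h1 <;>
      rcases le_total (f 0) (f y - t) with h2 | h2 <;>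
      simp [max_eq_left, max_eq_right, h1, h2] <;> linarith
end

section
/- Let f be a neighbor function that is unbounded above, and let g : [f(0), ∞) → [0,∞) be the inverse of f (so g(f(x)) = x for all x ≥ 0 and f(g(a)) = a for all a ≥ f(0)). Then for all 0 < x < y and t ≥ 0, the relative length of the uncertainty interval is non-increasing: (g(f(y)+t) − g(max(f(0), f(y)−t)))/y ≤ (g(f(x)+t) − g(max(f(0), f(x)−t)))/x. -/
open Set Real

theorem ConvexOn.sub_le_sub_of_le {𝕜 : Type*} [Field 𝕜] [LinearOrder 𝕜] [IsStrictOrderedRing 𝕜]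
    {s : Set 𝕜} {h : 𝕜 → 𝕜} (hh : ConvexOn 𝕜 s h) {a b d : 𝕜} (ha : a ∈ s) (hbd : b + d ∈ s)
    (hab : a ≤ b) (hd : 0 ≤ d) : h (a + d) - h a ≤ h (b + d) - h b := by
  rcases hd.eq_or_lt with rfl | hd
  · simp
  rcases hab.eq_or_lt with rfl | hab
  · simp
  have hs := hh.1.ordConnected.out ha hbd
  have had : a + d ∈ s := hs ⟨by linarith, by linarith⟩
  have hb : b ∈ s := hs ⟨hab.le, by linarith⟩
  have left := hh.secant_mono ha had hbd (by linarith) (by linarith) (by linarith)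
  rw [add_sub_cancel_left] at left
  have right : (h (b + d) - h a) / (b + d - a) ≤ (h (b + d) - h b) / d := by
    have := hh.secant_mono hbd ha hb (by linarith) (by linarith) hab.le
    rwa [← neg_div_neg_eq, neg_sub, neg_sub, show b - (b + d) = -d by ring, div_neg, ← neg_div,
      neg_sub] at this
  exact (div_le_div_iff_of_pos_right hd).1 (left.trans right)

section

variable {f : ℝ → ℝ} (hmono : StrictMonoOn f (Ici 0))
  (hconv : ConvexOn ℝ univ (fun u => f (exp u)))
include hmono hconv

theorem mul_le_mul_of_sub_le_sub_of_convexOn_exp {p q P Q : ℝ} (hp : 0 < p) (hpq : p ≤ q)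
    (hpP : p ≤ P) (hQ : 0 ≤ Q) (hle : f Q - f q ≤ f P - f p) : p * Q ≤ q * P := by
  have hq : 0 < q := hp.trans_le hpq
  have hP : 0 < P := hp.trans_le hpP
  have hinc := hconv.sub_le_sub_of_le (mem_univ (log p)) (mem_univ (log q + (log P - log p)))
    (log_le_log hp hpq) (sub_nonneg.2 (log_le_log hp hpP))
  have hshift : exp (log q + (log P - log p)) = q * P / p := by
    rw [exp_add, exp_sub, exp_log hp, exp_log hq, exp_log hP, mul_div_assoc]
  rw [add_sub_cancel, exp_log hp, exp_log hq, exp_log hP, hshift] at hinc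
  have hQle : Q ≤ q * P / p :=
    (hmono.le_iff_le hQ (show 0 ≤ q * P / p by positivity)).1 (by linarith)
  rwa [le_div_iff₀ hp, mul_comm] at hQle

theorem upper_endpoint_mul_le {x y A B t : ℝ} (hx : 0 < x) (hxy : x ≤ y) (hA : 0 ≤ A)
    (hB : 0 ≤ B) (hfA : f A = f x + t) (hfB : f B = f y + t) (ht : 0 ≤ t) :
    x * B ≤ y * A := by
  have hxA : x ≤ A := (hmono.le_iff_le hx.le hA).1 (by linarith)
  exact mul_le_mul_of_sub_le_sub_of_convexOn_exp hmono hconv hx hxy hxA hB (by linarith)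

theorem lower_endpoint_mul_le {x y C D t : ℝ} (hx : 0 < x) (hxy : x ≤ y) (hC : 0 ≤ C)
    (hD : 0 ≤ D) (hfC : f C = max (f 0) (f x - t)) (hfD : f D = max (f 0) (f y - t))
    (ht : 0 ≤ t) : y * C ≤ x * D := by
  rcases le_or_gt (f x - t) (f 0) with hlow | hlow
  · rw [max_eq_left hlow] at hfC
    rw [hmono.injOn hC self_mem_Ici hfC, mul_zero]
    exact mul_nonneg hx.le hD
  have hfxy : f x ≤ f y := hmono.monotoneOn hx.le (hx.trans_le hxy).le hxy
  rw [max_eq_right hlow.le] at hfC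
  rw [max_eq_right (by linarith)] at hfD
  have hCpos : 0 < C := (hmono.lt_iff_lt self_mem_Ici hC).1 (by linarith)
  have hCD : C ≤ D := (hmono.le_iff_le hC hD).1 (by linarith)
  have hCx : C ≤ x := (hmono.le_iff_le hC hx.le).1 (by linarith)
  linarith [mul_le_mul_of_sub_le_sub_of_convexOn_exp hmono hconv hCpos hCD hCx
    (hx.trans_le hxy).le (by linarith)]

end

theorem uncertainty_interval_relative_length_antitone_general (f g : ℝ → ℝ) (hf : IsNeighborFun f)
    (hg0 : ∀ a : ℝ, f 0 ≤ a → 0 ≤ g a)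
    (hfg : ∀ a : ℝ, f 0 ≤ a → f (g a) = a)
    (x y t : ℝ) (hx : 0 < x) (hxy : x < y) (ht : 0 ≤ t) :
    (g (f y + t) - g (max (f 0) (f y - t))) / y ≤
      (g (f x + t) - g (max (f 0) (f x - t))) / x := by
  obtain ⟨hmono, -, -, hconv⟩ := hf
  have hy : 0 < y := hx.trans hxy
  have hfx : f 0 ≤ f x := hmono.monotoneOn self_mem_Ici hx.le hx.le
  have hfy : f 0 ≤ f y := hmono.monotoneOn self_mem_Ici hy.le hy.le
  have upper := upper_endpoint_mul_le hmono hconv hx hxy.le (hg0 _ (by linarith))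
    (hg0 _ (by linarith)) (hfg _ (by linarith)) (hfg _ (by linarith)) ht
  have lower := lower_endpoint_mul_le hmono hconv hx hxy.le (hg0 _ (le_max_left _ _))
    (hg0 _ (le_max_left _ _)) (hfg _ (le_max_left _ _)) (hfg _ (le_max_left _ _)) ht
  rw [div_le_div_iff₀ hy hx]
  linarith

theorem uncertainty_interval_relative_length_antitone (f g : ℝ → ℝ) (hf : IsNeighborFun f)
    (hub : ∀ M : ℝ, ∃ x : ℝ, 0 ≤ x ∧ M ≤ f x)
    (hg0 : ∀ a : ℝ, f 0 ≤ a → 0 ≤ g a)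
    (hgf : ∀ x : ℝ, 0 ≤ x → g (f x) = x)
    (hfg : ∀ a : ℝ, f 0 ≤ a → f (g a) = a)
    (x y t : ℝ) (hx : 0 < x) (hxy : x < y) (ht : 0 ≤ t) :
    (g (f y + t) - g (max (f 0) (f y - t))) / y ≤
      (g (f x + t) - g (max (f 0) (f x - t))) / x :=
  uncertainty_interval_relative_length_antitone_general f g hf hg0 hfg x y t hx hxy ht
end

section
/- Let a₁ > a₂ ≥ 0 and b₁, b₂ be real numbers, and suppose there exists x₀ > 0 with a₁·x₀ + b₁ = a₂·x₀ + b₂, so that f(x) = min(a₁·x + b₁, a₂·x + b₂) is a non-decreasing concave piecewise linear function with two pieces meeting at x₀. Then the function x ↦ f(exp x) is not convex on ℝ. Consequently f is not a neighbor function. -/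
theorem piecewise_linear_not_neighbor (a₁ a₂ b₁ b₂ x₀ : ℝ)
    (ha : a₁ > a₂) (ha₂ : 0 ≤ a₂) (hx₀ : 0 < x₀)
    (hmeet : a₁ * x₀ + b₁ = a₂ * x₀ + b₂) :
    ¬ ConvexOn ℝ Set.univ
        (fun x : ℝ => min (a₁ * Real.exp x + b₁) (a₂ * Real.exp x + b₂)) ∧
      ¬ IsNeighborFun (fun x : ℝ => min (a₁ * x + b₁) (a₂ * x + b₂)) := by
  have key : ¬ ConvexOn ℝ Set.univ
      (fun x : ℝ => min (a₁ * Real.exp x + b₁) (a₂ * Real.exp x + b₂)) := by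
    intro hconv
    -- choose s > 0 with a₂ * exp s < a₁
    obtain ⟨s, hs, hlt⟩ : ∃ s > 0, a₂ * Real.exp s < a₁ := by
      rcases eq_or_lt_of_le ha₂ with h0 | h0
      · exact ⟨1, one_pos, by rw [← h0]; simpa using lt_of_le_of_lt ha₂ ha⟩
      · have hne : a₂ ≠ 0 := ne_of_gt h0
        refine ⟨Real.log ((a₁ + a₂) / (2 * a₂)), Real.log_pos ?_, ?_⟩
        · rw [lt_div_iff₀ (by linarith)]; linarith
        · rw [Real.exp_log (div_pos (by linarith) (by linarith))]
          have h2 : a₂ * ((a₁ + a₂) / (2 * a₂)) = (a₁ + a₂) / 2 := by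
            field_simp
          rw [h2]; linarith
    set L := Real.log x₀ with hL
    have hv1 : (1 : ℝ) < Real.exp s := by
      rw [← Real.exp_zero]; exact Real.exp_lt_exp.mpr hs
    have hu1 : Real.exp (-s) < 1 := by
      rw [← Real.exp_zero]; exact Real.exp_lt_exp.mpr (by linarith)
    have huv : Real.exp (-s) * Real.exp s = 1 := by
      rw [← Real.exp_add]; simp
    have hu0 : 0 < Real.exp (-s) := Real.exp_pos _
    have heL : Real.exp L = x₀ := Real.exp_log hx₀
    have he1 : Real.exp (L - s) = x₀ * Real.exp (-s) := by
      rw [sub_eq_add_neg, Real.exp_add, heL]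
    have he2 : Real.exp (L + s) = x₀ * Real.exp s := by
      rw [Real.exp_add, heL]
    have h := hconv.2 (Set.mem_univ (L - s)) (Set.mem_univ (L + s))
      (by norm_num : (0:ℝ) ≤ 1/2) (by norm_num : (0:ℝ) ≤ 1/2) (by norm_num)
    simp only [smul_eq_mul] at h
    have hmid : (1/2 : ℝ) * (L - s) + (1/2 : ℝ) * (L + s) = L := by ring
    rw [hmid] at h
    -- evaluate the three mins
    have hgL : min (a₁ * Real.exp L + b₁) (a₂ * Real.exp L + b₂) = a₁ * x₀ + b₁ := by
      rw [heL, hmeet, min_self]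
    have hg1 : min (a₁ * Real.exp (L - s) + b₁) (a₂ * Real.exp (L - s) + b₂)
        = a₁ * (x₀ * Real.exp (-s)) + b₁ := by
      rw [he1]
      apply min_eq_left
      nlinarith [mul_nonneg (mul_nonneg (sub_pos.mpr ha).le hx₀.le) (sub_pos.mpr hu1).le]
    have hg2 : min (a₁ * Real.exp (L + s) + b₁) (a₂ * Real.exp (L + s) + b₂)
        = a₂ * (x₀ * Real.exp s) + b₂ := by
      rw [he2]
      apply min_eq_right
      nlinarith [mul_nonneg (mul_nonneg (sub_pos.mpr ha).le hx₀.le) (sub_pos.mpr hv1).le]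
    rw [hgL, hg1, hg2] at h
    -- derive a₁ * (1 - e⁻ˢ) ≤ a₂ * (eˢ - 1)
    have hD : a₁ * (1 - Real.exp (-s)) ≤ a₂ * (Real.exp s - 1) := by
      nlinarith [h, hx₀, hmeet]
    have h1 : a₁ * Real.exp (-s) ≤ a₂ := by
      by_contra hc
      push_neg at hc
      have hm := mul_lt_mul_of_pos_right hc (sub_pos.mpr hv1)
      have heq : a₁ * Real.exp (-s) * (Real.exp s - 1) = a₁ * (1 - Real.exp (-s)) := by
        linear_combination a₁ * huv
      linarith
    have h2 := mul_le_mul_of_nonneg_right h1 (Real.exp_pos s).le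
    have h3 : a₁ * Real.exp (-s) * Real.exp s = a₁ := by
      rw [mul_assoc, huv, mul_one]
    linarith
  exact ⟨key, fun hnf => key hnf.2.2.2⟩
end

section
/- Let f be a neighbor function and δ ≥ 0. If x, y ≥ 0 satisfy |f(x) − f(y)| ≤ δ, then for every t ≥ 0 one has |f(x + t) − f(y + t)| ≤ δ. (This shows that the f-neighbor sensitivity of f composed with a group-by sum query over a confidential attribute with distance parameter δ is at most δ.) -/
/-!
For a concave `f` the increment `u ↦ f (u + t) - f u` is antitone, because the secant slope
over `[u, u + t]` decreases as the interval moves right. So shifting both arguments by `t` moves the larger one along a flatter stretch of `f`, and for a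
monotone `f` the gap `|f x - f y|` can only shrink.
-/

namespace ConcaveOn

variable {𝕜 : Type*} [Field 𝕜] [LinearOrder 𝕜] [IsStrictOrderedRing 𝕜] {s : Set 𝕜} {f : 𝕜 → 𝕜}

theorem map_add_sub_map_le_of_le (hf : ConcaveOn 𝕜 s f) {a b t : 𝕜} (ha : a ∈ s)
    (hbt : b + t ∈ s) (hab : a ≤ b) (ht : 0 ≤ t) :
    f (b + t) - f b ≤ f (a + t) - f a := by
  rcases ht.eq_or_lt with rfl | ht
  · simp
  have hb : b ∈ s := hf.1.ordConnected.out ha hbt ⟨hab, by linarith⟩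
  have hat : a + t ∈ s := hf.1.ordConnected.out ha hbt ⟨by linarith, by linarith⟩
  have h_lt : a < b + t := by linarith
  have h_left : slope f a (b + t) ≤ slope f a (a + t) :=
    hf.slope_anti ha ⟨hat, (lt_add_of_pos_right a ht).ne'⟩ ⟨hbt, h_lt.ne'⟩ (by linarith)
  have h_right : slope f (b + t) b ≤ slope f (b + t) a :=
    hf.slope_anti hbt ⟨ha, h_lt.ne⟩ ⟨hb, (lt_add_of_pos_right b ht).ne⟩ hab
  have h_slope : slope f b (b + t) ≤ slope f a (a + t) :=
    calc slope f b (b + t) = slope f (b + t) b := slope_comm f b (b + t)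
      _ ≤ slope f (b + t) a := h_right
      _ = slope f a (b + t) := slope_comm f (b + t) a
      _ ≤ slope f a (a + t) := h_left
  simpa [slope_def_field, div_le_div_iff_of_pos_right ht] using h_slope

theorem abs_map_add_sub_map_add_le (hf : ConcaveOn 𝕜 s f) (hmono : MonotoneOn f s)
    {x y t : 𝕜} (hx : x ∈ s) (hy : y ∈ s) (hxt : x + t ∈ s) (hyt : y + t ∈ s) (ht : 0 ≤ t) :
    |f (x + t) - f (y + t)| ≤ |f x - f y| := by
  wlog hyx : y ≤ x generalizing x y
  · rw [abs_sub_comm, abs_sub_comm (f x)]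
    exact this hy hx hyt hxt (le_of_not_ge hyx)
  rw [abs_of_nonneg (sub_nonneg.2 (hmono hyt hxt (by linarith))),
    abs_of_nonneg (sub_nonneg.2 (hmono hy hx hyx))]
  linarith [hf.map_add_sub_map_le_of_le hy hxt hyx ht]

end ConcaveOn

theorem neighbor_sensitivity_groupby_sum_general (f : ℝ → ℝ) (hf : IsNeighborFun f)
    (δ : ℝ) (x y : ℝ) (hx : 0 ≤ x) (hy : 0 ≤ y)
    (hclose : |f x - f y| ≤ δ) :
    ∀ t : ℝ, 0 ≤ t → |f (x + t) - f (y + t)| ≤ δ := by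
  obtain ⟨hmono, -, hconc, -⟩ := hf
  intro t ht
  have hmem : ∀ u : ℝ, 0 ≤ u → u + t ∈ Set.Ici 0 := fun u hu => Set.mem_Ici.2 (by linarith)
  exact (hconc.abs_map_add_sub_map_add_le hmono.monotoneOn hx hy (hmem x hx) (hmem y hy) ht).trans
    hclose

theorem neighbor_sensitivity_groupby_sum (f : ℝ → ℝ) (hf : IsNeighborFun f)
    (δ : ℝ) (hδ : 0 ≤ δ) (x y : ℝ) (hx : 0 ≤ x) (hy : 0 ≤ y)
    (hclose : |f x - f y| ≤ δ) :
    ∀ t : ℝ, 0 ≤ t → |f (x + t) - f (y + t)| ≤ δ :=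
  neighbor_sensitivity_groupby_sum_general f hf δ x y hx hy hclose
end

section
/- Let σ > 0, μ ≥ 0, and let a, b be real numbers with |a − b| ≤ σ·μ. Let Φ(t) denote the cumulative distribution function of the standard Gaussian measure on ℝ. Then for every Borel set S ⊆ ℝ and every real t: if the Gaussian measure with mean a and variance σ² assigns S probability at most Φ(t), then the Gaussian measure with mean b and variance σ² assigns S probability at most Φ(t + μ). (Equivalently, Φ⁻¹(P(N(b,σ²) ∈ S)) ≤ Φ⁻¹(P(N(a,σ²) ∈ S)) + μ, which is the μ-Gaussian-DP guarantee of adding N(0, σ²) noise to a statistic whose value changes by at most σμ between neighboring datasets.) -/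
/-!
After the affine change of variables `x ↦ (x - a) / c`, with `|c| = σ` and the sign of `c` chosen
so that `δ = (b - a) / c ≥ 0`, the two laws become `N(0, 1)` and `N(δ, 1)`, whose likelihood ratio
`exp (δ x - δ² / 2)` is increasing in `x`. By the Neyman–Pearson lemma, among the sets of
`N(0, 1)`-mass at most `Φ t` the half-line `[-t, ∞)` has the largest `N(δ, 1)`-mass, which is
`Φ (t + δ) ≤ Φ (t + μ)`.
-/

open ProbabilityTheory MeasureTheory

/-- The standard normal cumulative distribution function `Φ`. -/
noncomputable def stdGaussianCDF (t : ℝ) : ℝ :=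
  ((gaussianReal 0 1) (Set.Iic t)).toReal

open Set Real ENNReal NNReal

lemma ofReal_stdGaussianCDF (t : ℝ) :
    ENNReal.ofReal (stdGaussianCDF t) = gaussianReal 0 1 (Iic t) :=
  ofReal_toReal (measure_ne_top _ _)

section NeymanPearson

variable {α : Type*} [MeasurableSpace α] {μ : Measure α} [IsFiniteMeasure μ]
  {r : α → ℝ≥0∞} {H S : Set α} {k : ℝ≥0∞}

lemma measure_diff_le_measure_diff_of_le (hS : MeasurableSet S) (hH : MeasurableSet H)
    (h : μ S ≤ μ H) : μ (S \ H) ≤ μ (H \ S) := by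
  rw [← measure_inter_add_sdiff S hH, ← measure_inter_add_sdiff H hS, inter_comm] at h
  exact (ENNReal.add_le_add_iff_left (measure_ne_top _ _)).1 h

/-- The Neyman–Pearson lemma. -/
lemma withDensity_apply_le_of_likelihoodRatio (hr : Measurable r) (hS : MeasurableSet S)
    (hH : MeasurableSet H) (hlow : ∀ x ∉ H, r x ≤ k) (hhigh : ∀ x ∈ H, k ≤ r x)
    (h : μ S ≤ μ H) : μ.withDensity r S ≤ μ.withDensity r H := by
  have hSH : μ.withDensity r (S \ H) ≤ k * μ (S \ H) := by
    rw [withDensity_apply _ (hS.diff hH), ← setLIntegral_const]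
    exact setLIntegral_mono measurable_const fun x hx ↦ hlow x hx.2
  have hHS : k * μ (H \ S) ≤ μ.withDensity r (H \ S) := by
    rw [withDensity_apply _ (hH.diff hS), ← setLIntegral_const]
    exact setLIntegral_mono hr fun x hx ↦ hhigh x hx.1
  calc μ.withDensity r S
      = μ.withDensity r (S ∩ H) + μ.withDensity r (S \ H) := (measure_inter_add_sdiff S hH).symm
    _ ≤ μ.withDensity r (H ∩ S) + k * μ (S \ H) := by rw [inter_comm]; gcongr
    _ ≤ μ.withDensity r (H ∩ S) + k * μ (H \ S) := by
        gcongr _ + _ * ?_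
        exact measure_diff_le_measure_diff_of_le hS hH h
    _ ≤ μ.withDensity r (H ∩ S) + μ.withDensity r (H \ S) := by gcongr
    _ = μ.withDensity r H := measure_inter_add_sdiff H hS

end NeymanPearson

lemma gaussianReal_map_const_mul_add (m : ℝ) (v : ℝ≥0) (c a : ℝ) :
    (gaussianReal m v).map (fun x ↦ c * x + a)
      = gaussianReal (c * m + a) (⟨c ^ 2, sq_nonneg c⟩ * v) := by
  rw [show (fun x ↦ c * x + a) = (· + a) ∘ (c * ·) from rfl,
    ← Measure.map_map (by fun_prop) (by fun_prop), gaussianReal_map_const_mul,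
    gaussianReal_map_add_const]
  rfl

lemma gaussianReal_Ici (m : ℝ) (v : ℝ≥0) (c : ℝ) :
    gaussianReal m v (Ici c) = gaussianReal 0 v (Iic (m - c)) := by
  rw [← sub_zero m, ← gaussianReal_map_const_sub, Measure.map_apply (by fun_prop) measurableSet_Ici]
  congr 1
  ext x
  simp only [mem_preimage, mem_Ici, mem_Iic, sub_zero]
  constructor <;> intro <;> linarith

lemma gaussianReal_eq_withDensity_exp (δ : ℝ) :
    gaussianReal δ 1 = (gaussianReal 0 1).withDensity
      (fun x ↦ ENNReal.ofReal (exp (δ * x - δ ^ 2 / 2))) := by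
  rw [gaussianReal_of_var_ne_zero _ one_ne_zero, gaussianReal_of_var_ne_zero _ one_ne_zero,
    ← withDensity_mul _ (measurable_gaussianPDF _ _) (by fun_prop)]
  congr 1
  ext x
  rw [Pi.mul_apply, gaussianPDF, gaussianPDF, ← ofReal_mul (gaussianPDFReal_nonneg _ _ _)]
  simp only [gaussianPDFReal_def, mul_assoc, ← exp_add]
  congr 3
  push_cast
  ring

lemma gaussianReal_shift_apply_le {δ : ℝ} (hδ : 0 ≤ δ) {S : Set ℝ} (hS : MeasurableSet S) {t : ℝ}
    (h : gaussianReal 0 1 S ≤ gaussianReal 0 1 (Iic t)) :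
    gaussianReal δ 1 S ≤ gaussianReal 0 1 (Iic (t + δ)) := by
  have hH : gaussianReal 0 1 (Ici (-t)) = gaussianReal 0 1 (Iic t) := by
    rw [gaussianReal_Ici, zero_sub, neg_neg]
  rw [show t + δ = δ - -t by ring, ← gaussianReal_Ici, gaussianReal_eq_withDensity_exp]
  refine withDensity_apply_le_of_likelihoodRatio (k := ENNReal.ofReal (exp (δ * -t - δ ^ 2 / 2)))
    (by fun_prop) hS measurableSet_Ici (fun x hx ↦ ?_) (fun x hx ↦ ?_) (hH ▸ h)
  · have : x ≤ -t := (not_le.1 hx).le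
    gcongr
  · have : -t ≤ x := hx
    gcongr

theorem gaussian_mechanism_gdp_general (σ μ a b : ℝ) (hσ : 0 < σ)
    (hab : |a - b| ≤ σ * μ) (S : Set ℝ) (hS : MeasurableSet S) (t : ℝ)
    (h : (gaussianReal a ⟨σ ^ 2, sq_nonneg σ⟩) S ≤ ENNReal.ofReal (stdGaussianCDF t)) :
    (gaussianReal b ⟨σ ^ 2, sq_nonneg σ⟩) S ≤ ENNReal.ofReal (stdGaussianCDF (t + μ)) := by
  obtain ⟨c, hc, hδ⟩ : ∃ c, |c| = σ ∧ 0 ≤ (b - a) / c := by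
    rcases le_total a b with hle | hle
    · exact ⟨σ, abs_of_pos hσ, div_nonneg (by linarith) hσ.le⟩
    · exact ⟨-σ, by simp [hσ.le], div_nonneg_of_nonpos (by linarith) (by linarith)⟩
  have hc0 : c ≠ 0 := abs_pos.1 (hc ▸ hσ)
  have hδμ : (b - a) / c ≤ μ := by
    rw [← abs_of_nonneg hδ, abs_div, hc, div_le_iff₀ hσ, abs_sub_comm]
    linarith
  have hvar : (⟨c ^ 2, sq_nonneg c⟩ : ℝ≥0) * 1 = ⟨σ ^ 2, sq_nonneg σ⟩ := by
    ext; simp [← sq_abs c, hc]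
  have hφ : Measurable (fun x ↦ c * x + a) := by fun_prop
  have ha : gaussianReal a ⟨σ ^ 2, sq_nonneg σ⟩ = (gaussianReal 0 1).map (fun x ↦ c * x + a) := by
    rw [gaussianReal_map_const_mul_add, mul_zero, zero_add]
    exact congrArg _ hvar.symm
  have hb : gaussianReal b ⟨σ ^ 2, sq_nonneg σ⟩
      = (gaussianReal ((b - a) / c) 1).map (fun x ↦ c * x + a) := by
    rw [gaussianReal_map_const_mul_add, mul_div_cancel₀ _ hc0, sub_add_cancel]
    exact congrArg _ hvar.symm
  rw [ha, Measure.map_apply hφ hS, ofReal_stdGaussianCDF] at h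
  rw [hb, Measure.map_apply hφ hS, ofReal_stdGaussianCDF]
  exact (gaussianReal_shift_apply_le hδ (hφ hS) h).trans
    (measure_mono (Iic_subset_Iic.2 (by linarith)))

/-- Gaussian DP guarantee of the Gaussian mechanism: if a statistic changes by at most `σ * μ`
between neighboring datasets, then adding `N(0, σ²)` noise satisfies `μ`-GDP. -/
theorem gaussian_mechanism_gdp (σ μ a b : ℝ) (hσ : 0 < σ) (hμ : 0 ≤ μ)
    (hab : |a - b| ≤ σ * μ) (S : Set ℝ) (hS : MeasurableSet S) (t : ℝ)
    (h : (gaussianReal a ⟨σ ^ 2, sq_nonneg σ⟩) S ≤ ENNReal.ofReal (stdGaussianCDF t)) :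
    (gaussianReal b ⟨σ ^ 2, sq_nonneg σ⟩) S ≤ ENNReal.ofReal (stdGaussianCDF (t + μ)) :=
  gaussian_mechanism_gdp_general σ μ a b hσ hab S hS t h
end

section
/- Let σ > 0. For x ≥ 0 and z ∈ ℝ, let x̃(z) = (√x + z)² − σ² (the unbiased estimate of x), let v(x) = 2σ²(2x + σ²) (its true variance), and let ṽ(z) = 2σ²(2·x̃(z) + σ²) (the plug-in variance estimate). Then ṽ/v converges to 1 in probability as x → ∞: for every ε > 0, the probability under N(0,σ²) of { z : |ṽ(z)/v(x) − 1| > ε } tends to 0 as x → ∞. -/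
open ProbabilityTheory MeasureTheory Filter Topology

/-! For fixed noise `z` the ratio `ṽ/v` is a quotient of two quadratics in `√x` with the same
leading coefficient, so it tends to `1` pointwise as `x → ∞`. On a finite measure space pointwise
convergence implies convergence in measure. -/

theorem MeasureTheory.tendstoInMeasure_of_tendsto_ae_of_isCountablyGenerated
    {α ι E : Type*} [MeasurableSpace α] [PseudoEMetricSpace E] {μ : Measure α} [IsFiniteMeasure μ]
    {l : Filter ι} [l.IsCountablyGenerated] {f : ι → α → E} {g : α → E}
    (hf : ∀ i, AEStronglyMeasurable (f i) μ) (hfg : ∀ᵐ x ∂μ, Tendsto (f · x) l (𝓝 (g x))) :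
    TendstoInMeasure μ f l g := fun ε hε =>
  tendsto_of_seq_tendsto fun ns hns =>
    tendstoInMeasure_of_tendsto_ae (fun n => hf (ns n)) (hfg.mono fun _ hx => hx.comp hns) ε hε

theorem tendsto_mul_add_sq_add_div_mul_sq_add {a : ℝ} (ha : a ≠ 0) (b c d : ℝ) :
    Tendsto (fun s => (a * (s + b) ^ 2 + c) / (a * s ^ 2 + d)) atTop (𝓝 1) := by
  -- substitute `t = s⁻¹`, which turns the quotient into a function continuous at `t = 0`
  have hcont : Tendsto (fun t : ℝ => (a * (1 + b * t) ^ 2 + c * t ^ 2) / (a + d * t ^ 2))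
      (𝓝 0) (𝓝 1) := by
    have : ContinuousAt (fun t : ℝ => (a * (1 + b * t) ^ 2 + c * t ^ 2) / (a + d * t ^ 2)) 0 := by
      fun_prop (disch := simpa using ha)
    simpa [ha] using this.tendsto
  refine (hcont.comp tendsto_inv_atTop_zero).congr' ?_
  filter_upwards [eventually_gt_atTop 0] with s hs
  simp only [Function.comp_apply]
  field_simp

theorem tendsto_sqrt_noisysum_variance_ratio {σ : ℝ} (hσ : σ ≠ 0) (z : ℝ) :
    Tendsto
      (fun x => 2 * σ ^ 2 * (2 * ((√x + z) ^ 2 - σ ^ 2) + σ ^ 2) / (2 * σ ^ 2 * (2 * x + σ ^ 2)))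
      atTop (𝓝 1) := by
  refine ((tendsto_mul_add_sq_add_div_mul_sq_add two_ne_zero z (-σ ^ 2) (σ ^ 2)).comp
    Real.tendsto_sqrt_atTop).congr' ?_
  filter_upwards [eventually_ge_atTop 0] with x hx
  rw [Function.comp_apply, Real.sq_sqrt hx, mul_div_mul_left _ _ (by positivity)]
  ring_nf

/-- The plug-in variance estimate `ṽ(z) = 2σ²(2·((√x + z)² − σ²) + σ²)` of the true variance
`v(x) = 2σ²(2x + σ²)` satisfies `ṽ/v → 1` in probability as `x → ∞`. -/
theorem sqrt_noisysum_variance_ratio_tendsto (σ : ℝ) (hσ : 0 < σ) (ε : ℝ) (hε : 0 < ε) :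
    Tendsto
      (fun x : ℝ =>
        (gaussianReal 0 ⟨σ ^ 2, sq_nonneg σ⟩)
          {z : ℝ |
            ε < |(2 * σ ^ 2 * (2 * ((Real.sqrt x + z) ^ 2 - σ ^ 2) + σ ^ 2)) /
                  (2 * σ ^ 2 * (2 * x + σ ^ 2)) - 1|})
      atTop (nhds 0) := by
  -- `⟨σ ^ 2, _⟩` has type `{r : ℝ // 0 ≤ r}`, which instance search does not unfold to `ℝ≥0`
  have : IsProbabilityMeasure (gaussianReal 0 ⟨σ ^ 2, sq_nonneg σ⟩) :=
    instIsProbabilityMeasureGaussianReal _ _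
  have hconv := tendstoInMeasure_of_tendsto_ae_of_isCountablyGenerated
    (μ := gaussianReal 0 ⟨σ ^ 2, sq_nonneg σ⟩) (g := fun _ => 1)
    (fun _ => Continuous.aestronglyMeasurable (by fun_prop))
    (ae_of_all _ (tendsto_sqrt_noisysum_variance_ratio hσ.ne'))
  rw [tendstoInMeasure_iff_dist] at hconv
  exact tendsto_of_tendsto_of_tendsto_of_le_of_le tendsto_const_nhds (hconv ε hε)
    (fun _ => zero_le) fun _ => measure_mono (Set.ofPred_subset_ofPred.mpr fun _ => le_of_lt)
end

section
/- Let f be a neighbor function that is unbounded above, and let g : [f(0), ∞) → [0,∞) be the inverse of f (so g(f(x)) = x for all x ≥ 0 and f(g(a)) = a for all a ≥ f(0)). Then for every δ ≥ 0 and all 0 ≤ x ≤ u, one has x − g(max(f(0), f(x) − δ)) ≤ u − g(max(f(0), f(u) − δ)). (Consequently, the maximum of |x − y| over pairs x, y ∈ [0, u] with |f(x) − f(y)| ≤ δ equals u − g(max(f(0), f(u) − δ)), which is the per-group sensitivity used by the probably-no-clipping mechanism.) -/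
/-! The inverse `g` turns `f x - δ` into the point `y ≤ x` where `f` has dropped by at most `δ`.
Concavity says that increments of `f` over intervals of fixed length decrease to the right, so
`f (y + (u - x)) - f y ≥ f u - f x`; hence `f (u - x + y)` is at least `f u - δ`, and applying `g`
gives `g (max (f 0) (f u - δ)) ≤ u - x + y`, which is the claim. -/

theorem ConcaveOn.sub_le_sub_of_le {𝕜 : Type*} [Field 𝕜] [LinearOrder 𝕜] [IsStrictOrderedRing 𝕜]
    {s : Set 𝕜} {f : 𝕜 → 𝕜} (hf : ConcaveOn 𝕜 s f) {a c t : 𝕜} (ha : a ∈ s) (hct : c + t ∈ s)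
    (hac : a ≤ c) (ht : 0 ≤ t) :
    f (c + t) - f c ≤ f (a + t) - f a := by
  rcases (show a ≤ c + t by linarith).eq_or_lt with h | h
  · obtain rfl : c = a := by linarith
    obtain rfl : t = 0 := by linarith
    simp
  have hd : 0 < c + t - a := by linarith
  -- `a + t` and `c` are the two convex combinations of `a` and `c + t` with swapped weights.
  have hsum : t / (c + t - a) + (c - a) / (c + t - a) = 1 := by field_simp; ring
  have hsum' : (c - a) / (c + t - a) + t / (c + t - a) = 1 := by rw [add_comm, hsum]
  have hw₁ : 0 ≤ t / (c + t - a) := div_nonneg ht hd.le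
  have hw₂ : 0 ≤ (c - a) / (c + t - a) := div_nonneg (by linarith) hd.le
  have hat := hf.2 ha hct hw₂ hw₁ hsum'
  have hc := hf.2 ha hct hw₁ hw₂ hsum
  have hat_eq : (c - a) / (c + t - a) * a + t / (c + t - a) * (c + t) = a + t := by
    field_simp; ring
  have hc_eq : t / (c + t - a) * a + (c - a) / (c + t - a) * (c + t) = c := by
    field_simp; ring
  simp only [smul_eq_mul, hat_eq, hc_eq] at hat hc
  linear_combination hat + hc - (f a + f (c + t)) * hsum

theorem pnc_sensitivity_mono_general (f g : ℝ → ℝ) (hf : IsNeighborFun f)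
    (hg0 : ∀ a : ℝ, f 0 ≤ a → 0 ≤ g a)
    (hfg : ∀ a : ℝ, f 0 ≤ a → f (g a) = a)
    (δ : ℝ) (hδ : 0 ≤ δ) (x u : ℝ) (hx : 0 ≤ x) (hxu : x ≤ u) :
    x - g (max (f 0) (f x - δ)) ≤ u - g (max (f 0) (f u - δ)) := by
  obtain ⟨hmono, -, hconc, -⟩ := hf
  set y := g (max (f 0) (f x - δ))
  have hy : 0 ≤ y := hg0 _ (le_max_left _ _)
  have hfy : f y = max (f 0) (f x - δ) := hfg _ (le_max_left _ _)
  have hw : 0 ≤ u - x + y := by linarith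
  have hyx : y ≤ x := by
    refine (hmono.le_iff_le hy hx).1 (hfy ▸ max_le ?_ (by linarith))
    exact hmono.monotoneOn Set.self_mem_Ici hx hx
  have hinc : f (x + (u - x)) - f x ≤ f (y + (u - x)) - f y :=
    hconc.sub_le_sub_of_le hy (Set.mem_Ici.2 (by linarith)) hyx (by linarith)
  have hv : g (max (f 0) (f u - δ)) ≤ u - x + y := by
    refine (hmono.le_iff_le (hg0 _ (le_max_left _ _)) hw).1 ?_
    rw [hfg _ (le_max_left _ _)]
    refine max_le (hmono.monotoneOn Set.self_mem_Ici hw hw) ?_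
    rw [add_sub_cancel, add_comm y] at hinc
    linarith [le_max_right (f 0) (f x - δ)]
  linarith

/-- Per-group sensitivity bound of the probably-no-clipping mechanism: the clipped distance
`x − f⁻¹(max(f(0), f(x) − δ))` is monotone in `x` on `[0, u]`. -/
theorem pnc_sensitivity_mono (f g : ℝ → ℝ) (hf : IsNeighborFun f)
    (hub : ∀ M : ℝ, ∃ x : ℝ, 0 ≤ x ∧ M ≤ f x)
    (hg0 : ∀ a : ℝ, f 0 ≤ a → 0 ≤ g a)
    (hgf : ∀ x : ℝ, 0 ≤ x → g (f x) = x)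
    (hfg : ∀ a : ℝ, f 0 ≤ a → f (g a) = a)
    (δ : ℝ) (hδ : 0 ≤ δ) (x u : ℝ) (hx : 0 ≤ x) (hxu : x ≤ u) :
    x - g (max (f 0) (f x - δ)) ≤ u - g (max (f 0) (f u - δ)) :=
  pnc_sensitivity_mono_general f g hf hg0 hfg δ hδ x u hx hxu
end

section
/- Let f_A and f_* be neighbor functions, each unbounded above, with inverses g_A and g_* on [f_A(0), ∞) and [f_*(0), ∞) respectively, and let δ_A > 0. Assume that for all 0 ≤ x₁ ≤ x₂ one has f_*(x₂) − f_*(x₁) ≤ (f_A(x₂) − f_A(x₁))/δ_A. Then for every x ≥ 0 the uncertainty interval of (f_A, δ_A) around x is contained in the uncertainty interval of (f_*, 1) around x; that is, g_*(max(f_*(0), f_*(x) − 1)) ≤ g_A(max(f_A(0), f_A(x) − δ_A)) and g_A(f_A(x) + δ_A) ≤ g_*(f_*(x) + 1). -/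
/-!
The endpoints of the `(f_A, δ_A)`-interval are the points `z ≤ x ≤ y`
with `f_A x - f_A z ≤ δ_A` and `f_A y - f_A x = δ_A`; secant domination turns these
into `f⋆ x - f⋆ z ≤ 1` and `f⋆ y - f⋆ x ≤ 1`, which place `z` and `y` inside the
`(f⋆, 1)`-interval.
-/

section RightInverse

variable {α β : Type*} [LinearOrder α] [Preorder β] {f : α → β} {g : β → α} {s : Set α}
  {b : β} {y : α}

theorem StrictMonoOn.rightInv_le_iff (hf : StrictMonoOn f s) (hgb : g b ∈ s)
    (hfg : f (g b) = b) (hy : y ∈ s) : g b ≤ y ↔ b ≤ f y := by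
  rw [← hf.le_iff_le hgb hy, hfg]

theorem StrictMonoOn.le_rightInv_iff (hf : StrictMonoOn f s) (hgb : g b ∈ s)
    (hfg : f (g b) = b) (hy : y ∈ s) : y ≤ g b ↔ f y ≤ b := by
  rw [← hf.le_iff_le hy hgb, hfg]

end RightInverse

theorem sub_le_one_of_secant_le {fA fStar : ℝ → ℝ} {δA x₁ x₂ : ℝ} (hδA : 0 < δA)
    (hsec : ∀ x₁ x₂ : ℝ, 0 ≤ x₁ → x₁ ≤ x₂ →
      fStar x₂ - fStar x₁ ≤ (fA x₂ - fA x₁) / δA)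
    (hx₁ : 0 ≤ x₁) (hx : x₁ ≤ x₂) (hA : fA x₂ - fA x₁ ≤ δA) :
    fStar x₂ - fStar x₁ ≤ 1 :=
  (hsec x₁ x₂ hx₁ hx).trans ((div_le_one hδA).2 hA)

theorem combined_uncertainty_interval_contains_general (fA fStar gA gStar : ℝ → ℝ)
    (hfA : IsNeighborFun fA) (hfStar : IsNeighborFun fStar)
    (hgA0 : ∀ a : ℝ, fA 0 ≤ a → 0 ≤ gA a)
    (hfAg : ∀ a : ℝ, fA 0 ≤ a → fA (gA a) = a)
    (hgStar0 : ∀ a : ℝ, fStar 0 ≤ a → 0 ≤ gStar a)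
    (hfStarg : ∀ a : ℝ, fStar 0 ≤ a → fStar (gStar a) = a)
    (δA : ℝ) (hδA : 0 < δA)
    (hsec : ∀ x₁ x₂ : ℝ, 0 ≤ x₁ → x₁ ≤ x₂ →
      fStar x₂ - fStar x₁ ≤ (fA x₂ - fA x₁) / δA) :
    ∀ x : ℝ, 0 ≤ x →
      gStar (max (fStar 0) (fStar x - 1)) ≤ gA (max (fA 0) (fA x - δA)) ∧
        gA (fA x + δA) ≤ gStar (fStar x + 1) := by
  intro x hx
  obtain ⟨hA, -⟩ := hfA
  obtain ⟨hS, -⟩ := hfStar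
  have hA0 : fA 0 ≤ fA x := hA.monotoneOn Set.self_mem_Ici hx hx
  constructor
  · have ha : fA 0 ≤ max (fA 0) (fA x - δA) := le_max_left _ _
    set z := gA (max (fA 0) (fA x - δA))
    have hz : 0 ≤ z := hgA0 _ ha
    have hzx : z ≤ x := (hA.rightInv_le_iff hz (hfAg _ ha) hx).2 (max_le hA0 (by linarith))
    have hSxz : fStar x - fStar z ≤ 1 :=
      sub_le_one_of_secant_le hδA hsec hz hzx
        (by linarith [hfAg _ ha, le_max_right (fA 0) (fA x - δA)])
    have hm : fStar 0 ≤ max (fStar 0) (fStar x - 1) := le_max_left _ _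
    refine (hS.rightInv_le_iff (hgStar0 _ hm) (hfStarg _ hm) hz).2 (max_le ?_ (by linarith))
    exact hS.monotoneOn Set.self_mem_Ici hz hz
  · have hb : fA 0 ≤ fA x + δA := by linarith
    set y := gA (fA x + δA)
    have hy : 0 ≤ y := hgA0 _ hb
    have hxy : x ≤ y := (hA.le_rightInv_iff hy (hfAg _ hb) hx).2 (by linarith)
    have hSyx : fStar y - fStar x ≤ 1 :=
      sub_le_one_of_secant_le hδA hsec hx hxy (by linarith [hfAg _ hb])
    have hS0 : fStar 0 ≤ fStar x + 1 := by linarith [hS.monotoneOn Set.self_mem_Ici hx hx]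
    exact (hS.le_rightInv_iff (hgStar0 _ hS0) (hfStarg _ hS0) hy).2 (by linarith)

/-- Combining neighbor functions: if the secants of `f⋆` are dominated by those of `f_A / δ_A`,
then every `(f_A, δ_A)`-uncertainty interval is contained in the `(f⋆, 1)`-uncertainty interval. -/
theorem combined_uncertainty_interval_contains (fA fStar gA gStar : ℝ → ℝ)
    (hfA : IsNeighborFun fA) (hfStar : IsNeighborFun fStar)
    (hubA : ∀ M : ℝ, ∃ x : ℝ, 0 ≤ x ∧ M ≤ fA x)
    (hubStar : ∀ M : ℝ, ∃ x : ℝ, 0 ≤ x ∧ M ≤ fStar x)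
    (hgA0 : ∀ a : ℝ, fA 0 ≤ a → 0 ≤ gA a)
    (hgAf : ∀ x : ℝ, 0 ≤ x → gA (fA x) = x)
    (hfAg : ∀ a : ℝ, fA 0 ≤ a → fA (gA a) = a)
    (hgStar0 : ∀ a : ℝ, fStar 0 ≤ a → 0 ≤ gStar a)
    (hgStarf : ∀ x : ℝ, 0 ≤ x → gStar (fStar x) = x)
    (hfStarg : ∀ a : ℝ, fStar 0 ≤ a → fStar (gStar a) = a)
    (δA : ℝ) (hδA : 0 < δA)
    (hsec : ∀ x₁ x₂ : ℝ, 0 ≤ x₁ → x₁ ≤ x₂ →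
      fStar x₂ - fStar x₁ ≤ (fA x₂ - fA x₁) / δA) :
    ∀ x : ℝ, 0 ≤ x →
      gStar (max (fStar 0) (fStar x - 1)) ≤ gA (max (fA 0) (fA x - δA)) ∧
        gA (fA x + δA) ≤ gStar (fStar x + 1) :=
  combined_uncertainty_interval_contains_general fA fStar gA gStar hfA hfStar hgA0 hfAg hgStar0
    hfStarg δA hδA hsec
end

section
/- Let f_A and f_* be neighbor functions, each unbounded above, with inverses g_A and g_* on [f_A(0), ∞) and [f_*(0), ∞) respectively, and let δ_A > 0. Assume that for all 0 ≤ x₁ ≤ x₂ one has f_*(x₂) − f_*(x₁) ≥ (f_A(x₂) − f_A(x₁))/δ_A. Then for every x ≥ 0 the uncertainty interval of (f_*, 1) around x is contained in the uncertainty interval of (f_A, δ_A) around x; that is, g_A(max(f_A(0), f_A(x) − δ_A)) ≤ g_*(max(f_*(0), f_*(x) − 1)) and g_*(f_*(x) + 1) ≤ g_A(f_A(x) + δ_A). -/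
open Set

section RightInverse

variable {f g : ℝ → ℝ}

lemma le_inv_iff_of_strictMonoOn (hf : StrictMonoOn f (Ici 0))
    (hg0 : ∀ a, f 0 ≤ a → 0 ≤ g a) (hfg : ∀ a, f 0 ≤ a → f (g a) = a)
    {a y : ℝ} (ha : f 0 ≤ a) (hy : 0 ≤ y) : y ≤ g a ↔ f y ≤ a := by
  rw [← hf.le_iff_le (mem_Ici.2 hy) (mem_Ici.2 (hg0 a ha)), hfg a ha]

lemma inv_le_iff_of_strictMonoOn (hf : StrictMonoOn f (Ici 0))
    (hg0 : ∀ a, f 0 ≤ a → 0 ≤ g a) (hfg : ∀ a, f 0 ≤ a → f (g a) = a)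
    {a y : ℝ} (ha : f 0 ≤ a) (hy : 0 ≤ y) : g a ≤ y ↔ a ≤ f y := by
  rw [← hf.le_iff_le (mem_Ici.2 (hg0 a ha)) (mem_Ici.2 hy), hfg a ha]

end RightInverse

section SecantDomination

variable {fA fStar gA gStar : ℝ → ℝ} {δA : ℝ}

lemma lower_endpoint_le_of_secant_le (hfA : StrictMonoOn fA (Ici 0))
    (hfStar : StrictMonoOn fStar (Ici 0))
    (hgA0 : ∀ a, fA 0 ≤ a → 0 ≤ gA a) (hfAg : ∀ a, fA 0 ≤ a → fA (gA a) = a)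
    (hgStar0 : ∀ a, fStar 0 ≤ a → 0 ≤ gStar a)
    (hfStarg : ∀ a, fStar 0 ≤ a → fStar (gStar a) = a) (hδA : 0 < δA)
    (hsec : ∀ x₁ x₂ : ℝ, 0 ≤ x₁ → x₁ ≤ x₂ → (fA x₂ - fA x₁) / δA ≤ fStar x₂ - fStar x₁)
    {x : ℝ} (hx : 0 ≤ x) :
    gA (max (fA 0) (fA x - δA)) ≤ gStar (max (fStar 0) (fStar x - 1)) := by
  set b := max (fStar 0) (fStar x - 1)
  have hb : fStar 0 ≤ b := le_max_left _ _
  set v := gStar b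
  have hv : 0 ≤ v := hgStar0 b hb
  have hvx : v ≤ x := (inv_le_iff_of_strictMonoOn hfStar hgStar0 hfStarg hb hx).mpr <|
    max_le (hfStar.monotoneOn self_mem_Ici hx hx) (by linarith)
  have hgap : fA x - fA v ≤ δA := by
    have h := hsec v x hv hvx
    rw [hfStarg b hb, div_le_iff₀ hδA] at h
    calc fA x - fA v ≤ (fStar x - b) * δA := h
      _ ≤ 1 * δA := by gcongr; linarith [le_max_right (fStar 0) (fStar x - 1)]
      _ = δA := one_mul δA
  exact (inv_le_iff_of_strictMonoOn hfA hgA0 hfAg (le_max_left _ _) hv).mpr <|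
    max_le (hfA.monotoneOn self_mem_Ici hv hv) (by linarith)

lemma upper_endpoint_le_of_secant_le (hfA : StrictMonoOn fA (Ici 0))
    (hfStar : StrictMonoOn fStar (Ici 0))
    (hgA0 : ∀ a, fA 0 ≤ a → 0 ≤ gA a) (hfAg : ∀ a, fA 0 ≤ a → fA (gA a) = a)
    (hgStar0 : ∀ a, fStar 0 ≤ a → 0 ≤ gStar a)
    (hfStarg : ∀ a, fStar 0 ≤ a → fStar (gStar a) = a) (hδA : 0 < δA)
    (hsec : ∀ x₁ x₂ : ℝ, 0 ≤ x₁ → x₁ ≤ x₂ → (fA x₂ - fA x₁) / δA ≤ fStar x₂ - fStar x₁)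
    {x : ℝ} (hx : 0 ≤ x) :
    gStar (fStar x + 1) ≤ gA (fA x + δA) := by
  have ha : fA 0 ≤ fA x + δA := by linarith [hfA.monotoneOn self_mem_Ici hx hx]
  set y := gA (fA x + δA)
  have hy : 0 ≤ y := hgA0 _ ha
  have hxy : x ≤ y := (le_inv_iff_of_strictMonoOn hfA hgA0 hfAg ha hx).mpr (by linarith)
  have hstep : fStar x + 1 ≤ fStar y := by
    have h := hsec x y hx hxy
    rwa [hfAg _ ha, add_sub_cancel_left, div_self hδA.ne', le_sub_iff_add_le'] at h
  have hb : fStar 0 ≤ fStar x + 1 := by linarith [hfStar.monotoneOn self_mem_Ici hx hx]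
  exact (inv_le_iff_of_strictMonoOn hfStar hgStar0 hfStarg hb hy).mpr hstep

end SecantDomination

theorem heterogeneous_uncertainty_interval_contained_general (fA fStar gA gStar : ℝ → ℝ)
    (hfA : IsNeighborFun fA) (hfStar : IsNeighborFun fStar)
    (hgA0 : ∀ a : ℝ, fA 0 ≤ a → 0 ≤ gA a)
    (hfAg : ∀ a : ℝ, fA 0 ≤ a → fA (gA a) = a)
    (hgStar0 : ∀ a : ℝ, fStar 0 ≤ a → 0 ≤ gStar a)
    (hfStarg : ∀ a : ℝ, fStar 0 ≤ a → fStar (gStar a) = a)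
    (δA : ℝ) (hδA : 0 < δA)
    (hsec : ∀ x₁ x₂ : ℝ, 0 ≤ x₁ → x₁ ≤ x₂ →
      (fA x₂ - fA x₁) / δA ≤ fStar x₂ - fStar x₁) :
    ∀ x : ℝ, 0 ≤ x →
      gA (max (fA 0) (fA x - δA)) ≤ gStar (max (fStar 0) (fStar x - 1)) ∧
        gStar (fStar x + 1) ≤ gA (fA x + δA) := fun _ hx =>
  ⟨lower_endpoint_le_of_secant_le hfA.1 hfStar.1 hgA0 hfAg hgStar0 hfStarg hδA hsec hx,
    upper_endpoint_le_of_secant_le hfA.1 hfStar.1 hgA0 hfAg hgStar0 hfStarg hδA hsec hx⟩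

/-- Heterogeneous composition: if the secants of `f⋆` dominate those of `f_A / δ_A`,
then every `(f⋆, 1)`-uncertainty interval is contained in the `(f_A, δ_A)`-uncertainty interval. -/
theorem heterogeneous_uncertainty_interval_contained (fA fStar gA gStar : ℝ → ℝ)
    (hfA : IsNeighborFun fA) (hfStar : IsNeighborFun fStar)
    (hubA : ∀ M : ℝ, ∃ x : ℝ, 0 ≤ x ∧ M ≤ fA x)
    (hubStar : ∀ M : ℝ, ∃ x : ℝ, 0 ≤ x ∧ M ≤ fStar x)
    (hgA0 : ∀ a : ℝ, fA 0 ≤ a → 0 ≤ gA a)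
    (hgAf : ∀ x : ℝ, 0 ≤ x → gA (fA x) = x)
    (hfAg : ∀ a : ℝ, fA 0 ≤ a → fA (gA a) = a)
    (hgStar0 : ∀ a : ℝ, fStar 0 ≤ a → 0 ≤ gStar a)
    (hgStarf : ∀ x : ℝ, 0 ≤ x → gStar (fStar x) = x)
    (hfStarg : ∀ a : ℝ, fStar 0 ≤ a → fStar (gStar a) = a)
    (δA : ℝ) (hδA : 0 < δA)
    (hsec : ∀ x₁ x₂ : ℝ, 0 ≤ x₁ → x₁ ≤ x₂ →
      (fA x₂ - fA x₁) / δA ≤ fStar x₂ - fStar x₁) :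
    ∀ x : ℝ, 0 ≤ x →
      gA (max (fA 0) (fA x - δA)) ≤ gStar (max (fStar 0) (fStar x - 1)) ∧
        gStar (fStar x + 1) ≤ gA (fA x + δA) :=
  heterogeneous_uncertainty_interval_contained_general fA fStar gA gStar hfA hfStar hgA0 hfAg
    hgStar0 hfStarg δA hδA hsec
end

section
/- Let f be a neighbor function that is unbounded above, and let g : [f(0), ∞) → [0,∞) be the inverse of f (so g(f(x)) = x for all x ≥ 0 and f(g(a)) = a for all a ≥ f(0)). Then for all 0 < x ≤ y and every t ≥ 0, one has g(f(y) + t)/y ≤ g(f(x) + t)/x. -/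
/-!
Put `F = f ∘ exp`, which is convex and strictly increasing, so that `log ∘ g` inverts `F`.
Write `a = log x`, `b = log y` and `s = log g(f x + t) - log x ≥ 0`. Convexity makes the
increments `F (u + s) - F u` nondecreasing in `u`, hence
`F (b + s) ≥ F b + (F (a + s) - F a) = f y + t = F (log g(f y + t))`, and monotonicity of `F`
gives `log g(f y + t) - log y ≤ s`, which is the claim after exponentiating.
-/

open Set Real

section Increments

variable {𝕜 : Type*} [Field 𝕜] [LinearOrder 𝕜] [IsStrictOrderedRing 𝕜] {F : 𝕜 → 𝕜}

theorem ConvexOn.sub_le_sub_of_le_of_nonneg (hF : ConvexOn 𝕜 univ F) {a b d : 𝕜} (hab : a ≤ b)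
    (hd : 0 ≤ d) : F (a + d) - F a ≤ F (b + d) - F b := by
  rcases hd.eq_or_lt with rfl | hd
  · simp
  -- both slopes are compared with that of the secant through `a` and `b + d`
  have h₁ : (F (a + d) - F a) / (a + d - a) ≤ (F (b + d) - F a) / (b + d - a) :=
    hF.secant_mono (mem_univ _) (mem_univ _) (mem_univ _) (by linarith) (by linarith)
      (by linarith)
  have h₂ : (F a - F (b + d)) / (a - (b + d)) ≤ (F b - F (b + d)) / (b - (b + d)) :=
    hF.secant_mono (mem_univ _) (mem_univ _) (mem_univ _) (by linarith) (by linarith) hab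
  have hslope : (F a - F (b + d)) / (a - (b + d)) = (F (b + d) - F a) / (b + d - a) := by
    rw [← neg_sub, ← neg_sub (b + d), neg_div_neg_eq]
  have hslope' : (F b - F (b + d)) / (b - (b + d)) = (F (b + d) - F b) / d := by
    rw [← neg_sub, ← neg_sub (b + d), neg_div_neg_eq, add_sub_cancel_left]
  rw [add_sub_cancel_left] at h₁
  rw [hslope, hslope'] at h₂
  exact (div_le_div_iff_of_pos_right hd).1 (h₁.trans h₂)

theorem StrictMono.sub_le_sub_of_convexOn (hmono : StrictMono F) (hF : ConvexOn 𝕜 univ F)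
    {a b c d : 𝕜} (hab : a ≤ b) (hac : a ≤ c) (h : F d - F b ≤ F c - F a) : d - b ≤ c - a := by
  have hinc := hF.sub_le_sub_of_le_of_nonneg hab (sub_nonneg.2 hac)
  rw [add_sub_cancel] at hinc
  have : F d ≤ F (b + (c - a)) := by linarith
  linarith [hmono.le_iff_le.1 this]

end Increments

theorem inverse_shift_up_relative_antitone_general (f g : ℝ → ℝ) (hf : IsNeighborFun f)
    (hg0 : ∀ a : ℝ, f 0 ≤ a → 0 ≤ g a)
    (hfg : ∀ a : ℝ, f 0 ≤ a → f (g a) = a)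
    (x y t : ℝ) (hx : 0 < x) (hxy : x ≤ y) (ht : 0 ≤ t) :
    g (f y + t) / y ≤ g (f x + t) / x := by
  obtain ⟨hmono, -, -, hconv⟩ := hf
  have hy : 0 < y := hx.trans_le hxy
  have hFmono : StrictMono fun u => f (exp u) := fun u v huv =>
    hmono (exp_pos u).le (exp_pos v).le (exp_lt_exp.2 huv)
  have hF_log : ∀ u, 0 < u → f (exp (log u)) = f u := fun u hu => by rw [exp_log hu]
  have hshift : ∀ u, 0 < u → f 0 ≤ f u + t ∧ u ≤ g (f u + t) := fun u hu => by
    have hfu : f 0 ≤ f u + t := by linarith [hmono.monotoneOn self_mem_Ici hu.le hu.le]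
    refine ⟨hfu, (hmono.le_iff_le hu.le (hg0 _ hfu)).1 ?_⟩
    rw [hfg _ hfu]
    linarith
  obtain ⟨hfx, hxg⟩ := hshift x hx
  obtain ⟨hfy, hyg⟩ := hshift y hy
  have hgx : 0 < g (f x + t) := hx.trans_le hxg
  have hgy : 0 < g (f y + t) := hy.trans_le hyg
  have hlog : log (g (f y + t)) - log y ≤ log (g (f x + t)) - log x := by
    refine hFmono.sub_le_sub_of_convexOn hconv (log_le_log hx hxy) (log_le_log hx hxg) ?_
    simp only [hF_log _ hx, hF_log _ hy, hF_log _ hgx, hF_log _ hgy,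
      hfg _ hfx, hfg _ hfy]
    linarith
  rw [← log_div hgy.ne' hy.ne', ← log_div hgx.ne' hx.ne'] at hlog
  exact (log_le_log_iff (div_pos hgy hy) (div_pos hgx hx)).1 hlog

theorem inverse_shift_up_relative_antitone (f g : ℝ → ℝ) (hf : IsNeighborFun f)
    (hub : ∀ M : ℝ, ∃ x : ℝ, 0 ≤ x ∧ M ≤ f x)
    (hg0 : ∀ a : ℝ, f 0 ≤ a → 0 ≤ g a)
    (hgf : ∀ x : ℝ, 0 ≤ x → g (f x) = x)
    (hfg : ∀ a : ℝ, f 0 ≤ a → f (g a) = a)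
    (x y t : ℝ) (hx : 0 < x) (hxy : x ≤ y) (ht : 0 ≤ t) :
    g (f y + t) / y ≤ g (f x + t) / x :=
  inverse_shift_up_relative_antitone_general f g hf hg0 hfg x y t hx hxy ht
end

section
/- Let f be a neighbor function that is unbounded above, and let g : [f(0), ∞) → [0,∞) be the inverse of f (so g(f(x)) = x for all x ≥ 0 and f(g(a)) = a for all a ≥ f(0)). Then for all 0 < x ≤ y and every t ≥ 0 such that f(x) − t ≥ f(0), one has g(f(y) − t)/y ≥ g(f(x) − t)/x. -/
theorem inverse_shift_down_relative_monotone (f g : ℝ → ℝ) (hf : IsNeighborFun f)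
    (hub : ∀ M : ℝ, ∃ x : ℝ, 0 ≤ x ∧ M ≤ f x)
    (hg0 : ∀ a : ℝ, f 0 ≤ a → 0 ≤ g a)
    (hgf : ∀ x : ℝ, 0 ≤ x → g (f x) = x)
    (hfg : ∀ a : ℝ, f 0 ≤ a → f (g a) = a)
    (x y t : ℝ) (hx : 0 < x) (hxy : x ≤ y) (ht : 0 ≤ t)
    (hfx : f 0 ≤ f x - t) :
    g (f x - t) / x ≤ g (f y - t) / y := by
  have hy : 0 < y := lt_of_lt_of_le hx hxy
  rcases eq_or_lt_of_le hxy with rfl | hlt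
  · exact le_refl _
  set a := g (f x - t) with ha_def
  set b := g (f y - t) with hb_def
  have hmono := hf.1
  have hfxy : f x ≤ f y := le_of_lt (hmono hx.le hy.le hlt)
  have hfy0 : f 0 ≤ f y - t := le_trans hfx (by linarith)
  have ha0 : 0 ≤ a := hg0 _ hfx
  have hb0 : 0 ≤ b := hg0 _ hfy0
  have hfa : f a = f x - t := hfg _ hfx
  have hfb : f b = f y - t := hfg _ hfy0
  rcases eq_or_lt_of_le ha0 with ha0' | hapos
  · rw [← ha0', zero_div]
    exact div_nonneg hb0 hy.le
  -- a > 0 case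
  have hax : a ≤ x := by
    have : f a ≤ f x := by rw [hfa]; linarith
    exact (hmono.le_iff_le (Set.mem_Ici.mpr ha0) (Set.mem_Ici.mpr hx.le)).mp this
  set c := a * y / x with hc_def
  have hc0 : 0 < c := by positivity
  set u1 := Real.log a with hu1
  set u2 := Real.log x with hu2
  set v2 := Real.log y with hv2
  set v1 := u1 + (v2 - u2) with hv1_def
  have hd : u2 < v2 := Real.log_lt_log hx hlt
  have hu : u1 ≤ u2 := Real.log_le_log hapos hax
  have he1 : Real.exp u1 = a := Real.exp_log hapos
  have he2 : Real.exp u2 = x := Real.exp_log hx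
  have he3 : Real.exp v2 = y := Real.exp_log hy
  have he4 : Real.exp v1 = c := by
    rw [hv1_def, Real.exp_add, Real.exp_sub, he1, he2, he3, hc_def]
    ring
  have hconv := hf.2.2.2
  set G : ℝ → ℝ := fun u => f (Real.exp u) with hG
  have hs1 : (G v1 - G u1) / (v1 - u1) ≤ (G v2 - G u1) / (v2 - u1) :=
    hconv.secant_mono (Set.mem_univ u1) (Set.mem_univ v1) (Set.mem_univ v2)
      (by intro h; rw [hv1_def] at h; linarith [hd, sub_eq_zero.mp (by linarith : v2 - u2 = 0)])
      (by intro h; linarith) (by linarith)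
  have hs2 : (G u1 - G v2) / (u1 - v2) ≤ (G u2 - G v2) / (u2 - v2) :=
    hconv.secant_mono (Set.mem_univ v2) (Set.mem_univ u1) (Set.mem_univ u2)
      (by intro h; linarith) (by intro h; linarith) hu
  have e1 : (G u1 - G v2) / (u1 - v2) = (G v2 - G u1) / (v2 - u1) := by
    rw [div_eq_div_iff (by linarith) (by linarith)]; ring
  have e2 : (G u2 - G v2) / (u2 - v2) = (G v2 - G u2) / (v2 - u2) := by
    rw [div_eq_div_iff (by linarith) (by linarith)]; ring
  rw [e1, e2] at hs2
  have hchain : (G v1 - G u1) / (v2 - u2) ≤ (G v2 - G u2) / (v2 - u2) := by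
    have : v1 - u1 = v2 - u2 := by rw [hv1_def]; ring
    calc (G v1 - G u1) / (v2 - u2) = (G v1 - G u1) / (v1 - u1) := by rw [this]
      _ ≤ (G v2 - G u1) / (v2 - u1) := hs1
      _ ≤ (G v2 - G u2) / (v2 - u2) := hs2
  have hkey : G v1 - G u1 ≤ G v2 - G u2 :=
    (div_le_div_iff_of_pos_right (by linarith)).mp hchain
  have hGc : G v1 = f c := by rw [hG]; simp only [he4]
  have hGa : G u1 = f a := by rw [hG]; simp only [he1]
  have hGx : G u2 = f x := by rw [hG]; simp only [he2]
  have hGy : G v2 = f y := by rw [hG]; simp only [he3]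
  rw [hGc, hGa, hGx, hGy] at hkey
  have hfc : f c ≤ f b := by rw [hfb, hfa] at *; linarith
  have hcb : c ≤ b :=
    (hmono.le_iff_le (Set.mem_Ici.mpr hc0.le) (Set.mem_Ici.mpr hb0)).mp hfc
  rw [div_le_div_iff₀ hx hy]
  rw [hc_def, div_le_iff₀ hx] at hcb
  linarith
end
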